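/- arXiv:dg-ga/9702002 — 2 statements merged into one kernel-verified Lean document; each statement's English description precedes it below -/
import Mathlib

section
/- Let q ∈ ℝ, d ∈ ℤ, J a finite index set, and for each j ∈ J let a_j ∈ ℝ, k_j ∈ ℝ, and let σ_j be an even integer. Set ε_j = +1 if σ_j ≡ 2 (mod 4) and ε_j = −1 if σ_j ≡ 0 (mod 4). In ℂ[[t]] define G = exp(q t²/2) · Σ_{j∈J} a_j exp(k_j t) and H = exp(q t²/2) · Σ_{j∈J} ε_j a_j exp(k_j t), and assume that both G and H have vanishing coefficients in every degree n with n ≢ d (mod 2). Then [part of G in degrees ≡ d (mod 4)] + [part of H in degrees ≡ d+2 (mod 4)] = exp(q t²/2) · Σ_{j : σ_j ≡ 2 (mod 4)} a_j exp(k_j t) + i^{−d} exp(−q t²/2) · Σ_{j : σ_j ≡ 0 (mod 4)} a_j exp(i k_j t). -/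
/-- The formal exponential power series `exp(c t) ∈ ℂ[[t]]`. -/
noncomputable def pexp (c : ℂ) : PowerSeries ℂ :=
  PowerSeries.mk fun n => c ^ n / n.factorial

/-- The formal Gaussian power series `exp(q t²/2) ∈ ℂ[[t]]`. -/
noncomputable def pgauss (q : ℂ) : PowerSeries ℂ :=
  PowerSeries.mk fun n =>
    if Even n then (q / 2) ^ (n / 2) / (n / 2).factorial else 0

/-- The part of a formal power series in degrees `≡ d (mod 4)`. -/
noncomputable def part4 (d : ℤ) (F : PowerSeries ℂ) : PowerSeries ℂ :=
  PowerSeries.mk fun n =>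
    if (n : ℤ) % 4 = d % 4 then PowerSeries.coeff n F else 0

/-! Split the sum over `j` according to `σ j mod 4` as `P + N`, so that `G = g P + g N` and
`H = g P - g N` with `g = exp(q t²/2)`. In degree `n ≡ d (mod 2)` the factor `iⁿ⁻ᵈ = ±1` tells the
two residues mod 4 apart, so the left side has coefficients `(gP)ₙ + iⁿ⁻ᵈ (gN)ₙ`; and
multiplying the `n`-th coefficient by `iⁿ` is the substitution `t ↦ i t`, which turns `exp(q t²/2)`
into `exp(-q t²/2)` and `exp(k t)` into `exp(i k t)`. -/

open PowerSeries Complex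

theorem PowerSeries.rescale_C {R : Type*} [CommSemiring R] (c x : R) : rescale c (C x) = C x := by
  ext n
  rcases eq_or_ne n 0 with rfl | hn <;> simp [coeff_rescale, coeff_C, *]

theorem rescale_pexp (c x : ℂ) : rescale c (pexp x) = pexp (c * x) := by
  ext n
  simp [pexp, coeff_rescale, mul_pow, mul_div_assoc]

theorem rescale_I_pgauss (q : ℂ) : rescale I (pgauss q) = pgauss (-q) := by
  ext n
  simp only [pgauss, coeff_rescale, coeff_mk]
  by_cases hn : Even n
  · obtain ⟨m, rfl⟩ := hn
    rw [if_pos ⟨m, rfl⟩, if_pos ⟨m, rfl⟩, ← two_mul, pow_mul, I_sq,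
      Nat.mul_div_cancel_left m two_pos, neg_div, neg_pow (q / 2)]
    ring
  · simp [hn]

theorem Complex.I_zpow_emod_four (m : ℤ) : I ^ (m % 4) = I ^ m :=
  calc I ^ (m % 4) = I ^ (m % 4 + 4 * (m / 4)) := by
        rw [zpow_add₀ I_ne_zero, zpow_mul, show (4 : ℤ) = (4 : ℕ) from rfl, zpow_natCast,
          I_pow_four, one_zpow, mul_one]
    _ = I ^ m := by rw [Int.emod_add_mul_ediv]

theorem part4_add_add_part4_sub (d : ℤ) (P N : PowerSeries ℂ)
    (hadd : ∀ n : ℕ, ¬ ((n : ℤ) % 2 = d % 2) → coeff n (P + N) = 0)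
    (hsub : ∀ n : ℕ, ¬ ((n : ℤ) % 2 = d % 2) → coeff n (P - N) = 0) :
    part4 d (P + N) + part4 (d + 2) (P - N) = P + I ^ (-d) • rescale I N := by
  ext n
  simp only [part4, map_add, map_sub, coeff_mk, map_smul, coeff_rescale, smul_eq_mul]
  rw [← mul_assoc, ← zpow_natCast, ← zpow_add₀ I_ne_zero, ← I_zpow_emod_four]
  have cases : ((-d + n) % 4 = 0 ∧ (n : ℤ) % 4 = d % 4) ∨
      ((-d + n) % 4 = 2 ∧ (n : ℤ) % 4 = (d + 2) % 4) ∨ ¬ ((n : ℤ) % 2 = d % 2) := by omega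
  rcases cases with ⟨hI, hn⟩ | ⟨hI, hn⟩ | hn
  · rw [if_pos hn, if_neg (by omega), hI]
    simp
  · rw [if_neg (by omega), if_pos hn, hI]
    simp [sub_eq_add_neg]
  · rw [if_neg (by omega), if_neg (by omega)]
    have hadd := map_add (coeff n) P N ▸ hadd n hn
    have hsub := map_sub (coeff n) P N ▸ hsub n hn
    have hP : coeff n P = 0 := by linear_combination (hadd + hsub) / 2
    have hN : coeff n N = 0 := by linear_combination (hadd - hsub) / 2
    simp [hP, hN]

theorem filter_emod_four_ne_two {J : Type*} {σ : J → ℤ} (hσ : ∀ j, Even (σ j)) (s : Finset J) :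
    s.filter (fun j => ¬ σ j % 4 = 2) = s.filter (fun j => σ j % 4 = 0) :=
  Finset.filter_congr fun j _ => by have := Int.even_iff.mp (hσ j); omega

theorem part4_G_add_part4_H (q : ℝ) (d : ℤ) (J : Type*) [Fintype J]
    (a k : J → ℝ) (σ : J → ℤ) (hσ : ∀ j, Even (σ j))
    (ε : J → ℂ) (hε : ∀ j, ε j = if σ j % 4 = 2 then 1 else -1)
    (G H : PowerSeries ℂ)
    (hG : G = pgauss (q : ℂ) * ∑ j, PowerSeries.C (a j : ℂ) * pexp ((k j : ℂ)))
    (hH : H = pgauss (q : ℂ) * ∑ j, PowerSeries.C (ε j * (a j : ℂ)) * pexp ((k j : ℂ)))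
    (hGpar : ∀ n : ℕ, ¬ ((n : ℤ) % 2 = d % 2) → PowerSeries.coeff n G = 0)
    (hHpar : ∀ n : ℕ, ¬ ((n : ℤ) % 2 = d % 2) → PowerSeries.coeff n H = 0) :
    part4 d G + part4 (d + 2) H =
      pgauss (q : ℂ) * ∑ j ∈ Finset.univ.filter (fun j => σ j % 4 = 2),
          PowerSeries.C (a j : ℂ) * pexp ((k j : ℂ)) +
      (Complex.I ^ (-d)) •
        (pgauss (-(q : ℂ)) * ∑ j ∈ Finset.univ.filter (fun j => σ j % 4 = 0),
          PowerSeries.C (a j : ℂ) * pexp (Complex.I * (k j : ℂ))) := by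
  set f : J → PowerSeries ℂ := fun j => C (a j : ℂ) * pexp (k j)
  have hG' : G = pgauss q * ∑ j ∈ Finset.univ.filter (fun j => σ j % 4 = 2), f j +
      pgauss q * ∑ j ∈ Finset.univ.filter (fun j => σ j % 4 = 0), f j := by
    rw [hG, ← mul_add, ← filter_emod_four_ne_two hσ, Finset.sum_filter_add_sum_filter_not]
  have hH' : H = pgauss q * ∑ j ∈ Finset.univ.filter (fun j => σ j % 4 = 2), f j -
      pgauss q * ∑ j ∈ Finset.univ.filter (fun j => σ j % 4 = 0), f j := by
    have hεf : ∀ j, C (ε j * a j) * pexp (k j) = if σ j % 4 = 2 then f j else -f j := by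
      intro j
      rw [hε j]
      split_ifs <;> simp [f]
    rw [hH, ← mul_sub, ← filter_emod_four_ne_two hσ, Finset.sum_congr rfl fun j _ => hεf j,
      Finset.sum_ite, Finset.sum_neg_distrib, sub_eq_add_neg]
  rw [hG', hH', part4_add_add_part4_sub d _ _ (hG' ▸ hGpar) (hH' ▸ hHpar)]
  simp only [f, map_mul, map_sum, rescale_I_pgauss, rescale_C, rescale_pexp]
end

section
/- Let q be a nonzero real number, let k_1, …, k_n be pairwise distinct real numbers, let μ_1, …, μ_m be pairwise distinct complex numbers, and let a_1, …, a_n, d_1, …, d_m ∈ ℂ. If exp(q t²/2) · Σ_{j=1}^n a_j exp(k_j t) + exp(−q t²/2) · Σ_{l=1}^m d_l exp(μ_l t) = 0 in the formal power series ring ℂ[[t]], then a_j = 0 for all j and d_l = 0 for all l. -/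
/-!
Multiplying by `exp(-q t²/2)` turns the relation into
`∑ aⱼ e^{kⱼ t} + e^{-q t²} ∑ dₗ e^{μₗ t} = 0`. If `w' = r w`, the operator `F ↦ F' - c F` sends
`w P e^{μ t}` to `w (P' + (μ - c + r) P) e^{μ t}`, and `P ↦ P' + s P` is injective on `ℂ[t]` for
every polynomial `s ≠ 0`, as `deg P' < deg P ≤ deg (s P)`. For the Gaussian weight
`r = -2 q t` is never cancelled by the constant `μ - c`, while on the plain terms (`w = 1`,
`r = 0`) the multiplier `kⱼ - c` vanishes only when `kⱼ = c`. Applying the operator `deg P + 1`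
times with `c` the last plain exponent therefore kills that term and keeps every other nonzero
coefficient nonzero, so induction on the number of plain terms reduces everything to
`e^{-q t²} ∑ Qₗ e^{μₗ t} = 0`. The same induction without Gaussian terms shows that the
`e^{μₗ t}` are independent over `ℂ[t]`.
-/

open PowerSeries
open scoped Polynomial

section TwistedDerivative

variable {R : Type*} [CommRing R]

noncomputable def twistedDerivative (r : R[X]) : Module.End R R[X] :=
  Polynomial.derivative (R := R) + LinearMap.mulLeft R r

theorem twistedDerivative_apply (r p : R[X]) :
    twistedDerivative r p = Polynomial.derivative p + r * p :=
  rfl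

theorem twistedDerivative_zero : twistedDerivative (0 : R[X]) = Polynomial.derivative :=
  LinearMap.ext fun p => by simp [twistedDerivative_apply]

theorem twistedDerivative_injective [IsDomain R] {r : R[X]} (hr : r ≠ 0) :
    Function.Injective (twistedDerivative r) := by
  refine (injective_iff_map_eq_zero _).2 fun p hp => ?_
  by_contra hp0
  rw [twistedDerivative_apply, add_eq_zero_iff_eq_neg] at hp
  have hlt := Polynomial.degree_derivative_lt hp0
  rw [hp, Polynomial.degree_neg, mul_comm] at hlt
  exact (Polynomial.degree_le_mul_left p hr).not_gt hlt

theorem twistedDerivative_pow_apply_eq_zero_iff [IsDomain R] {r : R[X]} (hr : r ≠ 0) (s : ℕ)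
    {p : R[X]} : (twistedDerivative r ^ s) p = 0 ↔ p = 0 :=
  map_eq_zero_iff _ <| by
    rw [Module.End.coe_pow]
    exact (twistedDerivative_injective hr).iterate s

end TwistedDerivative

theorem derivative_pexp (c : ℂ) : d⁄dX ℂ (pexp c) = C c * pexp c := by
  ext n
  simp only [coeff_derivative, coeff_C_mul, pexp, coeff_mk, Nat.factorial_succ, pow_succ]
  have : (n.factorial : ℂ) ≠ 0 := by exact_mod_cast n.factorial_ne_zero
  push_cast
  field_simp

theorem pexp_ne_zero (c : ℂ) : pexp c ≠ 0 := fun h => by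
  simpa [pexp] using congrArg (coeff 0) h

theorem pexp_eq_rescale_exp (c : ℂ) : pexp c = rescale c (exp ℂ) := by
  ext n
  simp [pexp, coeff_rescale, coeff_exp, div_eq_mul_inv]

theorem pexp_mul_pexp (a b : ℂ) : pexp a * pexp b = pexp (a + b) := by
  simp only [pexp_eq_rescale_exp, exp_mul_exp_eq_exp_add]

theorem pgauss_eq_expand_pexp (q : ℂ) : pgauss q = expand 2 two_ne_zero (pexp (q / 2)) := by
  ext n
  simp [pgauss, pexp, coeff_expand, even_iff_two_dvd]

theorem pgauss_mul_pgauss (a b : ℂ) : pgauss a * pgauss b = pgauss (a + b) := by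
  rw [pgauss_eq_expand_pexp, pgauss_eq_expand_pexp, pgauss_eq_expand_pexp, ← map_mul,
    pexp_mul_pexp, add_div]

theorem pgauss_zero : pgauss 0 = 1 := by
  rw [pgauss_eq_expand_pexp, zero_div, pexp_eq_rescale_exp, rescale_zero]
  simp

theorem pgauss_ne_zero (q : ℂ) : pgauss q ≠ 0 := fun h => by
  simpa [pgauss] using congrArg (coeff 0) h

theorem derivative_pgauss (q : ℂ) :
    d⁄dX ℂ (pgauss q) = ((Polynomial.C q * Polynomial.X : ℂ[X]) : ℂ⟦X⟧) * pgauss q := by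
  rw [pgauss_eq_expand_pexp, expand_apply, derivative_subst (HasSubst.X_pow two_ne_zero),
    derivative_pexp, ← expand_apply 2 two_ne_zero, map_mul, expand_C, derivative_pow,
    derivative_X, expand_apply, Polynomial.coe_mul, Polynomial.coe_C, Polynomial.coe_X]
  have : C q = C (q / 2) * 2 := by
    rw [← map_ofNat C 2, ← map_mul, div_mul_cancel₀ q two_ne_zero]
  rw [this]
  ring

section DerivativeSub

noncomputable def derivativeSub {R : Type*} [CommRing R] (c : R) : Module.End R R⟦X⟧ :=
  (d⁄dX R).toLinearMap - c • LinearMap.id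

theorem derivativeSub_apply {R : Type*} [CommRing R] (c : R) (F : R⟦X⟧) :
    derivativeSub c F = d⁄dX R F - C c * F := by
  simp [derivativeSub, smul_eq_C_mul]

variable {w : ℂ⟦X⟧} {r : ℂ[X]}

theorem derivativeSub_mul_mul_pexp (hw : d⁄dX ℂ w = r * w) (c μ : ℂ) (P : ℂ[X]) :
    derivativeSub c (w * (P * pexp μ)) =
      w * (twistedDerivative (Polynomial.C (μ - c) + r) P * pexp μ) := by
  simp only [derivativeSub_apply, Derivation.leibniz, smul_eq_mul, hw, derivative_coe,
    derivative_pexp, twistedDerivative_apply, Polynomial.coe_add, Polynomial.coe_mul,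
    Polynomial.coe_C]
  rw [map_sub]
  ring

theorem derivativeSub_pow_mul_mul_pexp (hw : d⁄dX ℂ w = r * w) (c μ : ℂ) (P : ℂ[X]) (s : ℕ) :
    (derivativeSub c ^ s) (w * (P * pexp μ)) =
      w * ((twistedDerivative (Polynomial.C (μ - c) + r) ^ s) P * pexp μ) := by
  induction s with
  | zero => rfl
  | succ s ih =>
    rw [pow_succ', Module.End.mul_apply, ih, derivativeSub_mul_mul_pexp hw, pow_succ',
      Module.End.mul_apply]

theorem derivativeSub_pow_mul_pexp (c μ : ℂ) (P : ℂ[X]) (s : ℕ) :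
    (derivativeSub c ^ s) (P * pexp μ) =
      (twistedDerivative (Polynomial.C (μ - c)) ^ s) P * pexp μ := by
  simpa using derivativeSub_pow_mul_mul_pexp (w := 1) (r := 0) (by simp) c μ P s

theorem derivativeSub_pow_sum_add_mul_sum (hw : d⁄dX ℂ w = r * w) {ι κ : Type*} [Fintype ι]
    [Fintype κ] (c : ℂ) (s : ℕ) (k : ι → ℂ) (μ : κ → ℂ) (P : ι → ℂ[X]) (Q : κ → ℂ[X]) :
    (derivativeSub c ^ s) (∑ j, (P j : ℂ⟦X⟧) * pexp (k j) + w * ∑ l, (Q l : ℂ⟦X⟧) * pexp (μ l)) =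
      ∑ j, ((twistedDerivative (Polynomial.C (k j - c)) ^ s) (P j) : ℂ⟦X⟧) * pexp (k j) +
        w * ∑ l, ((twistedDerivative (Polynomial.C (μ l - c) + r) ^ s) (Q l) : ℂ⟦X⟧) *
          pexp (μ l) := by
  simp only [map_add, map_sum, Finset.mul_sum, derivativeSub_pow_mul_mul_pexp hw,
    derivativeSub_pow_mul_pexp]

end DerivativeSub

theorem polyExp_eq_zero_of_sum_add_mul_sum_eq_zero {w : ℂ⟦X⟧} {r : ℂ[X]}
    (hw : d⁄dX ℂ w = r * w) {m : ℕ} {μ : Fin m → ℂ}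
    (hweighted : ∀ Q : Fin m → ℂ[X], w * ∑ l, (Q l : ℂ⟦X⟧) * pexp (μ l) = 0 → ∀ l, Q l = 0)
    {n : ℕ} {k : Fin n → ℂ} (hk : Function.Injective k)
    (hkμ : ∀ j l, Polynomial.C (μ l - k j) + r ≠ 0) (P : Fin n → ℂ[X]) (Q : Fin m → ℂ[X])
    (h : ∑ j, (P j : ℂ⟦X⟧) * pexp (k j) + w * ∑ l, (Q l : ℂ⟦X⟧) * pexp (μ l) = 0) :
    (∀ j, P j = 0) ∧ ∀ l, Q l = 0 := by
  induction n generalizing Q with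
  | zero =>
    simp only [Finset.univ_eq_empty, Finset.sum_empty, zero_add] at h
    exact ⟨fun j => j.elim0, hweighted Q h⟩
  | succ n ih =>
    set c := k (Fin.last n)
    set N := (P (Fin.last n)).natDegree + 1
    have hN := congrArg (derivativeSub c ^ N) h
    rw [derivativeSub_pow_sum_add_mul_sum hw, map_zero, Fin.sum_univ_castSucc, sub_self,
      map_zero, twistedDerivative_zero, Module.End.pow_apply,
      Polynomial.iterate_derivative_eq_zero (Nat.lt_succ_self _), Polynomial.coe_zero, zero_mul,
      add_zero] at hN
    obtain ⟨hPN, hQN⟩ := ih (hk.comp (Fin.castSucc_injective n)) (fun j => hkμ _) _ _ hN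
    have hP (j : Fin n) : P j.castSucc = 0 :=
      (twistedDerivative_pow_apply_eq_zero_iff (Polynomial.C_ne_zero.2 <|
        sub_ne_zero.2 <| hk.ne (Fin.castSucc_lt_last j).ne) N).1 (hPN j)
    have hQ (l : Fin m) : Q l = 0 := (twistedDerivative_pow_apply_eq_zero_iff (hkμ _ l) N).1 (hQN l)
    have hlast : P (Fin.last n) = 0 := by
      simpa only [Fin.sum_univ_castSucc, hP, hQ, Polynomial.coe_zero, zero_mul,
        Finset.sum_const_zero, zero_add, mul_zero, add_zero, mul_eq_zero,
        Polynomial.coe_eq_zero_iff, pexp_ne_zero, or_false] using h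
    exact ⟨Fin.forall_fin_succ'.2 ⟨hP, hlast⟩, hQ⟩

theorem polyExp_eq_zero_of_sum_eq_zero {n : ℕ} {k : Fin n → ℂ} (hk : Function.Injective k)
    (P : Fin n → ℂ[X]) (h : ∑ j, (P j : ℂ⟦X⟧) * pexp (k j) = 0) : ∀ j, P j = 0 :=
  (polyExp_eq_zero_of_sum_add_mul_sum_eq_zero (w := 1) (r := 0) (μ := Fin.elim0) (by simp)
    (fun _ _ l => l.elim0) hk (fun _ l => l.elim0) P Fin.elim0 (by simpa using h)).1

/-- Independence of Gaussian-times-exponential formal power series: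
if `exp(q t²/2) ∑ⱼ aⱼ exp(kⱼ t) + exp(-q t²/2) ∑ₗ dₗ exp(μₗ t) = 0` in `ℂ[[t]]`
with `q ≠ 0`, the `kⱼ` pairwise distinct reals and the `μₗ` pairwise distinct
complex numbers, then all the coefficients vanish. -/
theorem gauss_exp_linearIndependent (q : ℝ) (hq : q ≠ 0) (n m : ℕ)
    (k : Fin n → ℝ) (hk : Function.Injective k)
    (μ : Fin m → ℂ) (hμ : Function.Injective μ)
    (a : Fin n → ℂ) (d : Fin m → ℂ)
    (h : pgauss (q : ℂ) * ∑ j, PowerSeries.C (a j) * pexp ((k j : ℂ)) +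
         pgauss (-(q : ℂ)) * ∑ l, PowerSeries.C (d l) * pexp (μ l) = 0) :
    (∀ j, a j = 0) ∧ (∀ l, d l = 0) := by
  have hunit : pgauss (-(q : ℂ)) * pgauss q = 1 := by
    rw [pgauss_mul_pgauss, neg_add_cancel, pgauss_zero]
  have hsq : pgauss (-(q : ℂ)) * pgauss (-q) = pgauss (-2 * q) := by
    rw [pgauss_mul_pgauss]
    ring_nf
  have h' : ∑ j, (Polynomial.C (a j) : ℂ⟦X⟧) * pexp (k j) +
      pgauss (-2 * q) * ∑ l, (Polynomial.C (d l) : ℂ⟦X⟧) * pexp (μ l) = 0 := by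
    simp only [Polynomial.coe_C]
    linear_combination pgauss (-(q : ℂ)) * h - (∑ j, C (a j) * pexp (k j)) * hunit -
      (∑ l, C (d l) * pexp (μ l)) * hsq
  have hgauss_ne (j : Fin n) (l : Fin m) :
      Polynomial.C (μ l - k j) + Polynomial.C (-2 * (q : ℂ)) * Polynomial.X ≠ 0 := fun h0 => by
    simpa [hq] using congrArg (Polynomial.coeff · 1) h0
  have hμ_indep (Q : Fin m → ℂ[X])
      (hQ : pgauss (-2 * q) * ∑ l, (Q l : ℂ⟦X⟧) * pexp (μ l) = 0) : ∀ l, Q l = 0 :=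
    polyExp_eq_zero_of_sum_eq_zero hμ Q ((mul_eq_zero.1 hQ).resolve_left (pgauss_ne_zero _))
  obtain ⟨ha, hd⟩ := polyExp_eq_zero_of_sum_add_mul_sum_eq_zero (derivative_pgauss _) hμ_indep
    (Complex.ofReal_injective.comp hk) hgauss_ne _ _ h'
  exact ⟨fun j => Polynomial.C_eq_zero.1 (ha j), fun l => Polynomial.C_eq_zero.1 (hd l)⟩
end
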